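/- Boundedness of all closed-loop signals: under the transformed closed-loop system assumptions, for all t ≥ 0, all i = 1,…,n and all j = 1,…,R, z_i(t)² ≤ 2 ψ̄_M max(V(0), W_d/β_d) and ‖Φ_{i,j}(t)‖² ≤ 2 γ_{i,j} max(V(0), W_d/β_d); in particular the transformed states and parameter errors are uniformly bounded on [0,∞). -/

import Mathlib

open Finset

lemma tele_aux (n : ℕ) (w : ℕ → ℝ) (h0 : w 0 = 0) :
    ∑ i ∈ Finset.Icc 1 n, (w i * w (i+1) - w i * w (i-1)) = w n * w (n+1) := by
  induction n with
  | zero => simp [h0]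
  | succ m ih =>
    rw [Finset.sum_Icc_succ_top (by omega : 1 ≤ m + 1), ih]
    rcases Nat.eq_zero_or_pos m with hm | hm
    · subst hm; simp [h0]
    · have : m + 1 - 1 = m := by omega
      rw [this]; ring

lemma lyap_aux (V D : ℝ → ℝ) (β W : ℝ) (hβ : 0 < β)
    (hd : ∀ t, 0 ≤ t → HasDerivAt V (D t) t)
    (hle : ∀ t, 0 ≤ t → D t ≤ -β * V t + W) :
    ∀ t, 0 ≤ t → V t ≤ max (V 0) (W / β) := by
  intro t ht
  set M := max (V 0) (W / β) with hM
  have hWM : W ≤ β * M := by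
    have h1 : W / β ≤ M := le_max_right _ _
    calc W = β * (W / β) := by field_simp
    _ ≤ β * M := by nlinarith
  set g : ℝ → ℝ := fun s => (V s - M) * Real.exp (β * s) with hg
  have hgd : ∀ s, 0 ≤ s → HasDerivAt g ((D s + β * (V s - M)) * Real.exp (β * s)) s := by
    intro s hs
    have h1 := (hd s hs).sub_const M
    have h2 : HasDerivAt (fun u : ℝ => Real.exp (β * u)) (Real.exp (β * s) * β) s := by
      convert ((hasDerivAt_id' s).const_mul β).exp using 1; ring
    have := h1.mul h2
    convert this using 1
    · rfl
    · rfl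
    · rfl
    ring
  have anti : AntitoneOn g (Set.Ici (0:ℝ)) := by
    apply antitoneOn_of_deriv_nonpos (convex_Ici 0)
    · intro s hs
      exact (hgd s hs).continuousAt.continuousWithinAt
    · intro s hs
      rw [interior_Ici] at hs
      exact (hgd s (le_of_lt hs)).differentiableAt.differentiableWithinAt
    · intro s hs
      rw [interior_Ici] at hs
      rw [(hgd s hs.le).deriv]
      have h3 := hle s hs.le
      have h4 : D s + β * (V s - M) ≤ 0 := by nlinarith
      nlinarith [Real.exp_pos (β * s)]
  have h5 := anti Set.self_mem_Ici (Set.mem_Ici.mpr ht) ht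
  have hg0 : g 0 ≤ 0 := by
    simp only [hg, mul_zero, Real.exp_zero, mul_one]
    have := le_max_left (V 0) (W / β)
    linarith
  have h6 : (V t - M) * Real.exp (β * t) ≤ 0 := le_trans h5 hg0
  nlinarith [Real.exp_pos (β * t)]
set_option maxHeartbeats 1000000 in
/-- Boundedness of all closed-loop signals: under the transformed closed-loop system assumptions, for all `t ≥ 0` and all admissible `i, j`, `zᵢ(t)² ≤ 2 ψ̄_M max(V(0), W_d/β_d)` and `‖Φᵢⱼ(t)‖² ≤ 2 γᵢⱼ max(V(0), W_d/β_d)`. -/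
theorem closed_loop_signals_bounded
    (n R : ℕ) (hn : 1 ≤ n) (hR : 1 ≤ R)
    (N : ℕ → ℕ → ℕ)
    (z z' : ℕ → ℝ → ℝ)
    (ψ ψ' : ℕ → ℝ → ℝ)
    (Φ Φ' : (i : ℕ) → (j : ℕ) → ℝ → EuclideanSpace ℝ (Fin (N i j)))
    (ρ : ℕ → ℝ → ℝ)
    (ζ : (i : ℕ) → (j : ℕ) → ℝ → EuclideanSpace ℝ (Fin (N i j)))
    (δ : ℕ → ℝ → ℝ)
    (ψl ψu ψd d k c : ℕ → ℝ)
    (γ σ : ℕ → ℕ → ℝ)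
    (θ : (i : ℕ) → (j : ℕ) → EuclideanSpace ℝ (Fin (N i j)))
    (hψl : ∀ i ∈ Finset.Icc 1 n, 0 < ψl i)
    (hψb : ∀ i ∈ Finset.Icc 1 n, ∀ t : ℝ, 0 ≤ t → ψl i ≤ ψ i t ∧ ψ i t ≤ ψu i)
    (hψd : ∀ i ∈ Finset.Icc 1 n, ∀ t : ℝ, 0 ≤ t → |ψ' i t| ≤ ψd i)
    (hδ : ∀ i ∈ Finset.Icc 1 n, ∀ t : ℝ, 0 ≤ t → |δ i t| ≤ d i)
    (hk : ∀ i ∈ Finset.Icc 1 n, 0 < k i)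
    (hγ : ∀ i ∈ Finset.Icc 1 n, ∀ j ∈ Finset.Icc 1 R, 0 < γ i j)
    (hσ : ∀ i ∈ Finset.Icc 1 n, ∀ j ∈ Finset.Icc 1 R, 0 < σ i j)
    (hc : ∀ i ∈ Finset.Icc 1 n, ψd i / (2 * ψl i) < c i)
    (hzdiff : ∀ i ∈ Finset.Icc 1 n, ∀ t : ℝ, 0 ≤ t → HasDerivAt (z i) (z' i t) t)
    (hψdiff : ∀ i ∈ Finset.Icc 1 n, ∀ t : ℝ, 0 ≤ t → HasDerivAt (ψ i) (ψ' i t) t)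
    (hΦdiff : ∀ i ∈ Finset.Icc 1 n, ∀ j ∈ Finset.Icc 1 R, ∀ t : ℝ, 0 ≤ t →
      HasDerivAt (Φ i j) (Φ' i j t) t)
    (hzzero : ∀ t : ℝ, z 0 t = 0)
    (hztop : ∀ t : ℝ, z (n + 1) t = 0)
    (hdyn : ∀ i ∈ Finset.Icc 1 n, ∀ t : ℝ, 0 ≤ t →
      z' i t = -(c i) * z i t + ψ i t * z (i + 1) t
        + ψ i t * ((∑ j ∈ Finset.Icc 1 R, ρ j t * (inner ℝ (Φ i j t) (ζ i j t) : ℝ)) - δ i t)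
        + ψ i t * (-(k i) * z i t - z (i - 1) t))
    (hadapt : ∀ i ∈ Finset.Icc 1 n, ∀ j ∈ Finset.Icc 1 R, ∀ t : ℝ, 0 ≤ t →
      Φ' i j t = (-(ρ j t) * γ i j * z i t) • ζ i j t - σ i j • (Φ i j t + θ i j))
    (V : ℝ → ℝ)
    (hV : ∀ t : ℝ, V t = (1 / 2) * ∑ i ∈ Finset.Icc 1 n, (z i t) ^ 2 / ψ i t
      + (1 / 2) * ∑ i ∈ Finset.Icc 1 n, ∑ j ∈ Finset.Icc 1 R, ‖Φ i j t‖ ^ 2 / γ i j)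
    (Wd : ℝ)
    (hWd : Wd = ∑ i ∈ Finset.Icc 1 n, (d i) ^ 2 / (4 * k i)
      + (1 / 2) * ∑ i ∈ Finset.Icc 1 n, ∑ j ∈ Finset.Icc 1 R, σ i j * ‖θ i j‖ ^ 2 / γ i j)
    (βd : ℝ)
    (hβd : βd = min
      (2 * ((Finset.Icc 1 n).inf' (Finset.nonempty_Icc.mpr hn)
          (fun i => c i - ψd i / (2 * ψl i)))
        * (((Finset.Icc 1 n).inf' (Finset.nonempty_Icc.mpr hn) ψl)
          / ((Finset.Icc 1 n).sup' (Finset.nonempty_Icc.mpr hn) ψu)))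
      ((Finset.Icc 1 n).inf' (Finset.nonempty_Icc.mpr hn)
        (fun i => (Finset.Icc 1 R).inf' (Finset.nonempty_Icc.mpr hR) (σ i))))
    (ψM : ℝ)
    (hψM : ψM = (Finset.Icc 1 n).sup' (Finset.nonempty_Icc.mpr hn) ψu)
    :
    ∀ t : ℝ, 0 ≤ t → ∀ i ∈ Finset.Icc 1 n, ∀ j ∈ Finset.Icc 1 R,
      (z i t) ^ 2 ≤ 2 * ψM * max (V 0) (Wd / βd) ∧
      ‖Φ i j t‖ ^ 2 ≤ 2 * γ i j * max (V 0) (Wd / βd) := by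
  
  -- basic memberships and positivity
  have h1n : (1:ℕ) ∈ Finset.Icc 1 n := Finset.mem_Icc.mpr ⟨le_refl 1, hn⟩
  have hψpos : ∀ i ∈ Finset.Icc 1 n, ∀ t : ℝ, 0 ≤ t → 0 < ψ i t := by
    intro i hi t ht
    exact lt_of_lt_of_le (hψl i hi) (hψb i hi t ht).1
  -- positivity of βd
  have hinfc : 0 < (Finset.Icc 1 n).inf' (Finset.nonempty_Icc.mpr hn)
      (fun i => c i - ψd i / (2 * ψl i)) := by
    rw [Finset.lt_inf'_iff]
    intro i hi
    exact sub_pos.mpr (hc i hi)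
  have hinfψl : 0 < (Finset.Icc 1 n).inf' (Finset.nonempty_Icc.mpr hn) ψl := by
    rw [Finset.lt_inf'_iff]
    intro i hi
    exact hψl i hi
  have hsupψu : 0 < (Finset.Icc 1 n).sup' (Finset.nonempty_Icc.mpr hn) ψu := by
    rw [Finset.lt_sup'_iff]
    refine ⟨1, h1n, ?_⟩
    have h1 := hψb 1 h1n 0 le_rfl
    have h2 := hψl 1 h1n
    linarith
  have hinfσ : 0 < (Finset.Icc 1 n).inf' (Finset.nonempty_Icc.mpr hn)
      (fun i => (Finset.Icc 1 R).inf' (Finset.nonempty_Icc.mpr hR) (σ i)) := by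
    rw [Finset.lt_inf'_iff]
    intro i hi
    rw [Finset.lt_inf'_iff]
    intro j hj
    exact hσ i hi j hj
  have hβpos : 0 < βd := by
    rw [hβd]
    exact lt_min (by positivity) hinfσ
  -- βd ≤ 2 * (c i - ψd i / (2 ψl i))
  have hratio : ((Finset.Icc 1 n).inf' (Finset.nonempty_Icc.mpr hn) ψl)
      / ((Finset.Icc 1 n).sup' (Finset.nonempty_Icc.mpr hn) ψu) ≤ 1 := by
    rw [div_le_one hsupψu]
    have h1 : (Finset.Icc 1 n).inf' (Finset.nonempty_Icc.mpr hn) ψl ≤ ψl 1 :=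
      Finset.inf'_le _ h1n
    have h2 := hψb 1 h1n 0 le_rfl
    have h3 : ψu 1 ≤ (Finset.Icc 1 n).sup' (Finset.nonempty_Icc.mpr hn) ψu :=
      Finset.le_sup' _ h1n
    linarith
  have hβc : ∀ i ∈ Finset.Icc 1 n, βd ≤ 2 * (c i - ψd i / (2 * ψl i)) := by
    intro i hi
    have h1 : βd ≤ 2 * ((Finset.Icc 1 n).inf' (Finset.nonempty_Icc.mpr hn)
        (fun i => c i - ψd i / (2 * ψl i)))
        * (((Finset.Icc 1 n).inf' (Finset.nonempty_Icc.mpr hn) ψl)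
          / ((Finset.Icc 1 n).sup' (Finset.nonempty_Icc.mpr hn) ψu)) := by
      rw [hβd]; exact min_le_left _ _
    have h2 : (Finset.Icc 1 n).inf' (Finset.nonempty_Icc.mpr hn)
        (fun i => c i - ψd i / (2 * ψl i)) ≤ c i - ψd i / (2 * ψl i) :=
      Finset.inf'_le _ hi
    nlinarith
  have hβσ : ∀ i ∈ Finset.Icc 1 n, ∀ j ∈ Finset.Icc 1 R, βd ≤ σ i j := by
    intro i hi j hj
    have h1 : βd ≤ (Finset.Icc 1 n).inf' (Finset.nonempty_Icc.mpr hn)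
        (fun i => (Finset.Icc 1 R).inf' (Finset.nonempty_Icc.mpr hR) (σ i)) := by
      rw [hβd]; exact min_le_right _ _
    have h2 : (Finset.Icc 1 n).inf' (Finset.nonempty_Icc.mpr hn)
        (fun i => (Finset.Icc 1 R).inf' (Finset.nonempty_Icc.mpr hR) (σ i))
        ≤ (Finset.Icc 1 R).inf' (Finset.nonempty_Icc.mpr hR) (σ i) := Finset.inf'_le _ hi
    have h3 : (Finset.Icc 1 R).inf' (Finset.nonempty_Icc.mpr hR) (σ i) ≤ σ i j :=
      Finset.inf'_le _ hj
    linarith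
  -- the derivative of V
  set D : ℝ → ℝ := fun t =>
    ∑ i ∈ Finset.Icc 1 n, (z' i t * z i t / ψ i t
      - (z i t)^2 * ψ' i t / (2 * (ψ i t)^2)
      + ∑ j ∈ Finset.Icc 1 R, (inner ℝ (Φ' i j t) (Φ i j t) : ℝ) / γ i j) with hDdef
  have hVfun : V = fun t => (∑ i ∈ Finset.Icc 1 n, (1/2) * ((z i t)^2 / ψ i t))
      + ∑ i ∈ Finset.Icc 1 n, ∑ j ∈ Finset.Icc 1 R, (1/2) * (‖Φ i j t‖^2 / γ i j) := by
    funext t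
    rw [hV t]
    simp [Finset.mul_sum]
  have hVdiff : ∀ t : ℝ, 0 ≤ t → HasDerivAt V (D t) t := by
    intro t ht
    have hterm1 : ∀ i ∈ Finset.Icc 1 n,
        HasDerivAt (fun s => (1/2 : ℝ) * ((z i s)^2 / ψ i s))
          (z' i t * z i t / ψ i t - (z i t)^2 * ψ' i t / (2 * (ψ i t)^2)) t := by
      intro i hi
      have hne : ψ i t ≠ 0 := (hψpos i hi t ht).ne'
      have h := (((hzdiff i hi t ht).pow 2).div (hψdiff i hi t ht) hne).const_mul (1/2 : ℝ)
      convert h using 1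
      · rfl
      · rfl
      · rfl
      field_simp
      simp only [Pi.pow_apply]
      ring
    have hterm2 : ∀ i ∈ Finset.Icc 1 n, ∀ j ∈ Finset.Icc 1 R,
        HasDerivAt (fun s => (1/2 : ℝ) * (‖Φ i j s‖^2 / γ i j))
          ((inner ℝ (Φ' i j t) (Φ i j t) : ℝ) / γ i j) t := by
      intro i hi j hj
      have hγne : γ i j ≠ 0 := (hγ i hi j hj).ne'
      have hfun : (fun s => (1/2 : ℝ) * (‖Φ i j s‖^2 / γ i j))
          = fun s => (1/2 : ℝ) * ((inner ℝ (Φ i j s) (Φ i j s) : ℝ) / γ i j) := by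
        funext s
        rw [real_inner_self_eq_norm_sq]
      rw [hfun]
      have h := (((hΦdiff i hi j hj t ht).inner ℝ (hΦdiff i hi j hj t ht)).div_const
        (γ i j)).const_mul (1/2 : ℝ)
      convert h using 1
      · rfl
      · rfl
      rw [real_inner_comm (Φ' i j t) (Φ i j t)]
      field_simp
      ring
    have h := (HasDerivAt.sum (fun i hi => hterm1 i hi)).add
      (HasDerivAt.sum (fun i hi => HasDerivAt.sum (fun j hj => hterm2 i hi j hj)))
    rw [hVfun]
    convert h using 1
    · rfl
    · rfl
    · ext x; simp [Finset.sum_apply]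
    rw [hDdef]
    simp [Finset.sum_add_distrib]
  -- the pointwise inequality
  set E : ℕ → ℝ → ℝ := fun i t =>
    -(c i) * (z i t)^2 / ψ i t - (z i t)^2 * ψ' i t / (2 * (ψ i t)^2)
      - k i * (z i t)^2 - z i t * δ i t
      - ∑ j ∈ Finset.Icc 1 R, σ i j / γ i j * (‖Φ i j t‖^2
        + (inner ℝ (θ i j) (Φ i j t) : ℝ)) with hEdef
  have hDle : ∀ t : ℝ, 0 ≤ t → D t ≤ -βd * V t + Wd := by
    intro t ht
    have hstep1 : D t = ∑ i ∈ Finset.Icc 1 n,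
        (E i t + (z i t * z (i+1) t - z i t * z (i-1) t)) := by
      rw [hDdef]
      refine Finset.sum_congr rfl ?_
      intro i hi
      have hne : ψ i t ≠ 0 := (hψpos i hi t ht).ne'
      have hB : ∀ j ∈ Finset.Icc 1 R, (inner ℝ (Φ' i j t) (Φ i j t) : ℝ) / γ i j
          = -(ρ j t * (inner ℝ (Φ i j t) (ζ i j t) : ℝ) * z i t)
            - σ i j / γ i j * (‖Φ i j t‖^2 + (inner ℝ (θ i j) (Φ i j t) : ℝ)) := by
        intro j hj
        have hγne : γ i j ≠ 0 := (hγ i hi j hj).ne'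
        rw [hadapt i hi j hj t ht, inner_sub_left, real_inner_smul_left,
          real_inner_smul_left, inner_add_left, real_inner_self_eq_norm_sq,
          real_inner_comm (ζ i j t) (Φ i j t)]
        field_simp
      rw [Finset.sum_congr rfl hB, Finset.sum_sub_distrib]
      have e1 : ∑ j ∈ Finset.Icc 1 R,
          -(ρ j t * (inner ℝ (Φ i j t) (ζ i j t) : ℝ) * z i t)
          = -((∑ j ∈ Finset.Icc 1 R, ρ j t * (inner ℝ (Φ i j t) (ζ i j t) : ℝ)) * z i t) := by
        rw [Finset.sum_mul]
        exact Finset.sum_neg_distrib _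
      rw [e1, hdyn i hi t ht, hEdef]
      field_simp
      ring
    have hstep2 : ∑ i ∈ Finset.Icc 1 n,
        (E i t + (z i t * z (i+1) t - z i t * z (i-1) t))
        = ∑ i ∈ Finset.Icc 1 n, E i t := by
      rw [Finset.sum_add_distrib, tele_aux n (fun i => z i t) (hzzero t), hztop t]
      ring
    have hstep3 : ∀ i ∈ Finset.Icc 1 n, E i t
        ≤ -βd * ((1/2) * ((z i t)^2 / ψ i t)) + (d i)^2 / (4 * k i)
          + ∑ j ∈ Finset.Icc 1 R, (-βd * ((1/2) * (‖Φ i j t‖^2 / γ i j))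
            + (1/2) * (σ i j * ‖θ i j‖^2 / γ i j)) := by
      intro i hi
      have hP : 0 < ψ i t := hψpos i hi t ht
      have hPl : ψl i ≤ ψ i t := (hψb i hi t ht).1
      have hψlpos := hψl i hi
      have habs := abs_le.mp (hψd i hi t ht)
      have hψdnn : 0 ≤ ψd i := le_trans (abs_nonneg _) (hψd i hi t ht)
      have hZ : (0:ℝ) ≤ (z i t)^2 := sq_nonneg _
      -- (a)
      have ha : -(c i) * (z i t)^2 / ψ i t - (z i t)^2 * ψ' i t / (2 * (ψ i t)^2)
          ≤ -βd * ((1/2) * ((z i t)^2 / ψ i t)) := by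
        have e1 : 2 * (c i - ψd i / (2 * ψl i)) = 2 * c i - ψd i / ψl i := by
          field_simp
        have e2 : βd ≤ 2 * c i - ψd i / ψl i := by
          have h := hβc i hi
          rw [e1] at h
          exact h
        have e3 : ψd i ≤ ψd i / ψl i * ψ i t := by
          rw [div_mul_eq_mul_div, le_div_iff₀ hψlpos]
          nlinarith
        have h1 : βd * ψ i t ≤ 2 * c i * ψ i t + ψ' i t := by
          nlinarith [mul_nonneg (sub_nonneg.mpr e2) hP.le]
        rw [← sub_nonneg]
        have h2 : -βd * ((1/2) * ((z i t)^2 / ψ i t))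
            - (-(c i) * (z i t)^2 / ψ i t - (z i t)^2 * ψ' i t / (2 * (ψ i t)^2))
            = (z i t)^2 * (2 * c i * ψ i t + ψ' i t - βd * ψ i t) / (2 * (ψ i t)^2) := by
          field_simp
          ring
        rw [h2]
        apply div_nonneg
        · exact mul_nonneg hZ (by linarith)
        · positivity
      -- (b)
      have hkp := hk i hi
      have hdabs := abs_le.mp (hδ i hi t ht)
      have hδ2 : (δ i t)^2 ≤ (d i)^2 := sq_le_sq' hdabs.1 hdabs.2
      have hb : -(k i) * (z i t)^2 - z i t * δ i t ≤ (d i)^2 / (4 * k i) := by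
        rw [le_div_iff₀ (by positivity : (0:ℝ) < 4 * k i)]
        nlinarith [sq_nonneg (2 * k i * z i t + δ i t)]
      -- (c)
      have hcsum : -∑ j ∈ Finset.Icc 1 R, σ i j / γ i j * (‖Φ i j t‖^2
            + (inner ℝ (θ i j) (Φ i j t) : ℝ))
          ≤ ∑ j ∈ Finset.Icc 1 R, (-βd * ((1/2) * (‖Φ i j t‖^2 / γ i j))
            + (1/2) * (σ i j * ‖θ i j‖^2 / γ i j)) := by
        rw [← Finset.sum_neg_distrib]
        apply Finset.sum_le_sum
        intro j hj
        have hγp := hγ i hi j hj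
        have hσp := hσ i hi j hj
        have hbs := hβσ i hi j hj
        have hplus : (0:ℝ) ≤ ‖θ i j + Φ i j t‖^2 := sq_nonneg _
        rw [norm_add_sq_real] at hplus
        rw [← sub_nonneg]
        have h2 : -βd * ((1/2) * (‖Φ i j t‖^2 / γ i j))
            + (1/2) * (σ i j * ‖θ i j‖^2 / γ i j)
            - -(σ i j / γ i j * (‖Φ i j t‖^2 + (inner ℝ (θ i j) (Φ i j t) : ℝ)))
            = (-βd * ‖Φ i j t‖^2 / 2 + σ i j * ‖θ i j‖^2 / 2
              + σ i j * (‖Φ i j t‖^2 + (inner ℝ (θ i j) (Φ i j t) : ℝ))) / γ i j := by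
          field_simp
          ring
        rw [h2]
        apply div_nonneg _ hγp.le
        nlinarith [mul_nonneg hσp.le hplus, mul_nonneg (sub_nonneg.mpr hbs)
          (sq_nonneg ‖Φ i j t‖)]
      have : E i t ≤ -βd * ((1/2) * ((z i t)^2 / ψ i t)) + (d i)^2 / (4 * k i)
          + ∑ j ∈ Finset.Icc 1 R, (-βd * ((1/2) * (‖Φ i j t‖^2 / γ i j))
            + (1/2) * (σ i j * ‖θ i j‖^2 / γ i j)) := by
        rw [hEdef]
        dsimp only
        linarith
      exact this
    have hstep4 : ∑ i ∈ Finset.Icc 1 n,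
        (-βd * ((1/2) * ((z i t)^2 / ψ i t)) + (d i)^2 / (4 * k i)
          + ∑ j ∈ Finset.Icc 1 R, (-βd * ((1/2) * (‖Φ i j t‖^2 / γ i j))
            + (1/2) * (σ i j * ‖θ i j‖^2 / γ i j)))
        = -βd * V t + Wd := by
      rw [hV t, hWd]
      simp only [Finset.sum_add_distrib, ← Finset.mul_sum]
      ring
    calc D t = ∑ i ∈ Finset.Icc 1 n, E i t := by rw [hstep1, hstep2]
    _ ≤ ∑ i ∈ Finset.Icc 1 n,
        (-βd * ((1/2) * ((z i t)^2 / ψ i t)) + (d i)^2 / (4 * k i)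
          + ∑ j ∈ Finset.Icc 1 R, (-βd * ((1/2) * (‖Φ i j t‖^2 / γ i j))
            + (1/2) * (σ i j * ‖θ i j‖^2 / γ i j))) := Finset.sum_le_sum hstep3
    _ = -βd * V t + Wd := hstep4
  -- apply the Lyapunov lemma
  have hVle := lyap_aux V D βd Wd hβpos hVdiff hDle
  set M := max (V 0) (Wd / βd) with hMdef
  have hM0 : 0 ≤ M := by
    have hV0 : 0 ≤ V 0 := by
      rw [hV 0]
      apply add_nonneg
      · apply mul_nonneg (by norm_num)
        apply Finset.sum_nonneg
        intro i hi
        exact div_nonneg (sq_nonneg _) (hψpos i hi 0 le_rfl).le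
      · apply mul_nonneg (by norm_num)
        apply Finset.sum_nonneg
        intro i hi
        apply Finset.sum_nonneg
        intro j hj
        exact div_nonneg (sq_nonneg _) (hγ i hi j hj).le
    exact le_trans hV0 (le_max_left _ _)
  -- extraction
  intro t ht i hi j hj
  have hVt : V t ≤ M := hVle t ht
  have hψposi : 0 < ψ i t := hψpos i hi t ht
  have hsumz : (z i t)^2 / ψ i t ≤ ∑ i' ∈ Finset.Icc 1 n, (z i' t)^2 / ψ i' t := by
    apply Finset.single_le_sum (f := fun i' => (z i' t)^2 / ψ i' t) _ hi
    intro i' hi'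
    exact div_nonneg (sq_nonneg _) (hψpos i' hi' t ht).le
  have hsumΦ : ‖Φ i j t‖^2 / γ i j
      ≤ ∑ i' ∈ Finset.Icc 1 n, ∑ j' ∈ Finset.Icc 1 R, ‖Φ i' j' t‖^2 / γ i' j' := by
    have h1 : ‖Φ i j t‖^2 / γ i j ≤ ∑ j' ∈ Finset.Icc 1 R, ‖Φ i j' t‖^2 / γ i j' := by
      apply Finset.single_le_sum (f := fun j' => ‖Φ i j' t‖^2 / γ i j') _ hj
      intro j' hj'
      exact div_nonneg (sq_nonneg _) (hγ i hi j' hj').le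
    refine le_trans h1 ?_
    apply Finset.single_le_sum
      (f := fun i' => ∑ j' ∈ Finset.Icc 1 R, ‖Φ i' j' t‖^2 / γ i' j') _ hi
    intro i' hi'
    apply Finset.sum_nonneg
    intro j' hj'
    exact div_nonneg (sq_nonneg _) (hγ i' hi' j' hj').le
  have hΦnn : (0:ℝ) ≤ ∑ i' ∈ Finset.Icc 1 n, ∑ j' ∈ Finset.Icc 1 R,
      ‖Φ i' j' t‖^2 / γ i' j' := by
    apply Finset.sum_nonneg
    intro i' hi'
    apply Finset.sum_nonneg
    intro j' hj'
    exact div_nonneg (sq_nonneg _) (hγ i' hi' j' hj').le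
  have hznn : (0:ℝ) ≤ ∑ i' ∈ Finset.Icc 1 n, (z i' t)^2 / ψ i' t := by
    apply Finset.sum_nonneg
    intro i' hi'
    exact div_nonneg (sq_nonneg _) (hψpos i' hi' t ht).le
  have hVtexp := hV t
  constructor
  · have h1 : (z i t)^2 / ψ i t ≤ 2 * M := by
      have : (1/2 : ℝ) * ((z i t)^2 / ψ i t) ≤ V t := by
        rw [hVtexp]
        nlinarith
      linarith
    have h2 : (z i t)^2 ≤ 2 * M * ψ i t := (div_le_iff₀ hψposi).mp h1
    have h3 : ψ i t ≤ ψM := by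
      rw [hψM]
      exact le_trans (hψb i hi t ht).2 (Finset.le_sup' _ hi)
    nlinarith
  · have h1 : ‖Φ i j t‖^2 / γ i j ≤ 2 * M := by
      have : (1/2 : ℝ) * (‖Φ i j t‖^2 / γ i j) ≤ V t := by
        rw [hVtexp]
        nlinarith
      linarith
    have h2 : ‖Φ i j t‖^2 ≤ 2 * M * γ i j := (div_le_iff₀ (hγ i hi j hj)).mp h1
    nlinarith
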